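/- Backward Gronwall inequality: Let T > 0, let ν be a finite Borel measure on ℝ with no atoms, let c ≥ 0, and let g : ℝ → ℝ be a bounded Borel measurable function satisfying 0 ≤ g(t) ≤ c + ∫_{[t,T)} g(s) ν(ds) for every t ∈ [0,T]. Then g(t) ≤ c · exp(ν([t,T))) for every t ∈ [0,T]. -/

import Mathlib

/-! Write `F t = ν [t, T)`. Since `ν` has no atoms, `ν [t, r] + F r = F t` for `t ≤ r ≤ T`, and
Fubini on the triangle `t ≤ s ≤ r < T` turns this into `(k + 1) ∫_{[t,T)} F ^ k dν = F t ^ (k + 1)`,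
exactly as for Lebesgue measure. Iterating the integral inequality `n` times therefore bounds `g t`
by the `n`-th partial sum of `c exp (F t)` plus the remainder `M F(t) ^ n / n!`, which tends to
zero. -/

open MeasureTheory Set
open scoped ENNReal Nat

theorem measurable_measure_Ico_left {ν : Measure ℝ} (T : ℝ) : Measurable fun s => ν (Ico s T) :=
  Antitone.measurable fun _ _ h => measure_mono (Ico_subset_Ico_left h)

theorem lintegral_Ico_lintegral_Ico {ν : Measure ℝ} [SFinite ν] {f : ℝ → ℝ≥0∞}
    (hf : Measurable f) (t T : ℝ) :
    ∫⁻ s in Ico t T, ∫⁻ r in Ico s T, f r ∂ν ∂ν = ∫⁻ r in Ico t T, ν (Icc t r) * f r ∂ν := by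
  let S : Set (ℝ × ℝ) := {p | t ≤ p.1 ∧ p.1 ≤ p.2 ∧ p.2 < T}
  have hS : MeasurableSet S :=
    (measurableSet_le measurable_const measurable_fst).inter
      ((measurableSet_le measurable_fst measurable_snd).inter
        (measurableSet_lt measurable_snd measurable_const))
  have swap := lintegral_lintegral_swap (μ := ν) (ν := ν)
    (f := fun s r => S.indicator (fun p => f p.2) (s, r))
    ((hf.comp measurable_snd).indicator hS).aemeasurable
  convert swap using 1 <;> rw [← lintegral_indicator measurableSet_Ico] <;> congr with x
  · by_cases hx : x ∈ Ico t T
    · rw [indicator_of_mem hx, ← lintegral_indicator measurableSet_Ico]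
      congr with r
      simp only [indicator_apply, mem_Ico, S, mem_ofPred_eq]
      grind
    · rw [indicator_of_notMem hx, eq_comm, lintegral_eq_zero_iff' (by fun_prop)]
      refine Filter.Eventually.of_forall fun r => indicator_of_notMem ?_ _
      simp only [mem_Ico, S, mem_ofPred_eq] at hx ⊢
      grind
  · by_cases hx : x ∈ Ico t T
    · rw [indicator_of_mem hx, mul_comm, ← lintegral_indicator_const measurableSet_Icc]
      congr with s
      simp only [indicator_apply, mem_Icc, S, mem_ofPred_eq]
      grind
    · rw [indicator_of_notMem hx, eq_comm, lintegral_eq_zero_iff' (by fun_prop)]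
      refine Filter.Eventually.of_forall fun s => indicator_of_notMem ?_ _
      simp only [mem_Ico, S, mem_ofPred_eq] at hx ⊢
      grind

section Atomless

variable {ν : Measure ℝ} [NullSingletonClass ν]

theorem measure_Icc_add_measure_Ico {t r T : ℝ} (htr : t ≤ r) (hrT : r ≤ T) :
    ν (Icc t r) + ν (Ico r T) = ν (Ico t T) := by
  rw [← measure_congr Ico_ae_eq_Icc, ← measure_union Ico_disjoint_Ico_same measurableSet_Ico,
    Ico_union_Ico_eq_Ico htr hrT]

theorem natCast_add_one_mul_lintegral_measure_Ico_pow [SFinite ν] (k : ℕ) (t T : ℝ) :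
    (k + 1) * ∫⁻ s in Ico t T, ν (Ico s T) ^ k ∂ν = ν (Ico t T) ^ (k + 1) := by
  induction k generalizing t with
  | zero => simp
  | succ k ih =>
    have hΦ := measurable_measure_Ico_left (ν := ν) T
    have hI : ∫⁻ s in Ico t T, ν (Ico s T) ^ (k + 1) ∂ν
        = (k + 1) * ∫⁻ r in Ico t T, ν (Icc t r) * ν (Ico r T) ^ k ∂ν := by
      simp_rw [← ih, ← lintegral_Ico_lintegral_Ico (hΦ.pow_const k)]
      exact lintegral_const_mul' _ _ (by simp)
    calc ((k + 1 : ℕ) + 1 : ℝ≥0∞) * ∫⁻ s in Ico t T, ν (Ico s T) ^ (k + 1) ∂ν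
        = (k + 1) * ∫⁻ r in Ico t T, ν (Icc t r) * ν (Ico r T) ^ k ∂ν
          + (k + 1) * ∫⁻ r in Ico t T, ν (Ico r T) ^ (k + 1) ∂ν := by
          rw [← hI]; push_cast; ring
      _ = (k + 1) * ∫⁻ r in Ico t T, (ν (Icc t r) + ν (Ico r T)) * ν (Ico r T) ^ k ∂ν := by
          rw [← mul_add, ← lintegral_add_right _ (hΦ.pow_const _)]
          simp_rw [add_mul, pow_succ']
      _ = (k + 1) * ∫⁻ r in Ico t T, ν (Ico t T) * ν (Ico r T) ^ k ∂ν := by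
          congr 1
          refine setLIntegral_congr_fun measurableSet_Ico fun r hr => ?_
          rw [measure_Icc_add_measure_Ico hr.1 hr.2.le]
      _ = ν (Ico t T) ^ (k + 1 + 1) := by
          rw [lintegral_const_mul _ (hΦ.pow_const _), mul_left_comm, ih, pow_succ' _ (k + 1)]

theorem setIntegral_measureReal_Ico_pow_div_factorial [IsFiniteMeasure ν] (k : ℕ) (t T : ℝ) :
    ∫ s in Ico t T, ν.real (Ico s T) ^ k / k ! ∂ν = ν.real (Ico t T) ^ (k + 1) / (k + 1)! := by
  have h := congrArg ENNReal.toReal (natCast_add_one_mul_lintegral_measure_Ico_pow (ν := ν) k t T)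
  rw [ENNReal.toReal_mul, ← integral_toReal
    ((measurable_measure_Ico_left T).pow_const k).aemeasurable
    (.of_forall fun _ => by simp [measure_lt_top])] at h
  simp only [ENNReal.toReal_pow, ← measureReal_def, ← Nat.cast_add_one, ENNReal.toReal_natCast] at h
  rw [integral_div, Nat.factorial_succ, Nat.cast_mul, ← h]
  push_cast
  field_simp

end Atomless

theorem integrable_measureReal_Ico_pow {ν μ : Measure ℝ} [IsFiniteMeasure ν] [IsFiniteMeasure μ]
    (T : ℝ) (k : ℕ) : Integrable (fun s => ν.real (Ico s T) ^ k) μ :=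
  .of_bound ((measurable_measure_Ico_left T).ennreal_toReal.pow_const k).aestronglyMeasurable
    (ν.real univ ^ k) <| .of_forall fun s => by
      rw [norm_pow, Real.norm_of_nonneg measureReal_nonneg]
      exact pow_le_pow_left₀ measureReal_nonneg (measureReal_mono (subset_univ _)) k

theorem le_sum_pow_div_factorial_add_of_le_add_setIntegral {ν : Measure ℝ} [IsFiniteMeasure ν]
    [NullSingletonClass ν] {a T c M : ℝ} {g : ℝ → ℝ} (hg_meas : Measurable g)
    (hg_bdd : ∀ s, |g s| ≤ M) (hg : ∀ t ∈ Icc a T, g t ≤ c + ∫ s in Ico t T, g s ∂ν) (n : ℕ) :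
    ∀ t ∈ Icc a T, g t ≤ c * ∑ k ∈ Finset.range n, ν.real (Ico t T) ^ k / k !
      + M * (ν.real (Ico t T) ^ n / n !) := by
  induction n with
  | zero => simpa using fun t _ _ => (abs_le.mp (hg_bdd t)).2
  | succ n ih =>
    intro t ht
    have hsum : Integrable (fun s => c * ∑ k ∈ Finset.range n, ν.real (Ico s T) ^ k / k !)
        (ν.restrict (Ico t T)) :=
      (integrable_finsetSum _ fun k _ =>
        (integrable_measureReal_Ico_pow T k).div_const _).const_mul c
    have hrem : Integrable (fun s => M * (ν.real (Ico s T) ^ n / n !)) (ν.restrict (Ico t T)) :=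
      ((integrable_measureReal_Ico_pow T n).div_const _).const_mul M
    have hg_int : Integrable g (ν.restrict (Ico t T)) :=
      .of_bound hg_meas.aestronglyMeasurable M (.of_forall hg_bdd)
    calc g t ≤ c + ∫ s in Ico t T, g s ∂ν := hg t ht
      _ ≤ c + ∫ s in Ico t T, (c * ∑ k ∈ Finset.range n, ν.real (Ico s T) ^ k / k !
            + M * (ν.real (Ico s T) ^ n / n !)) ∂ν :=
          add_le_add_right (setIntegral_mono_on hg_int (hsum.add hrem) measurableSet_Ico
            fun s hs => ih s ⟨ht.1.trans hs.1, hs.2.le⟩) c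
      _ = c * (1 + ∑ k ∈ Finset.range n, ν.real (Ico t T) ^ (k + 1) / (k + 1)!)
            + M * (ν.real (Ico t T) ^ (n + 1) / (n + 1)!) := by
          rw [integral_add hsum hrem, integral_const_mul, integral_const_mul,
            integral_finsetSum _ fun k _ => (integrable_measureReal_Ico_pow T k).div_const _]
          simp only [setIntegral_measureReal_Ico_pow_div_factorial]
          ring
      _ = c * ∑ k ∈ Finset.range (n + 1), ν.real (Ico t T) ^ k / k !
            + M * (ν.real (Ico t T) ^ (n + 1) / (n + 1)!) := by
          rw [Finset.sum_range_succ']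
          simp [add_comm]

theorem le_of_forall_le_add_mul_pow_div_factorial {y a M x : ℝ}
    (h : ∀ n : ℕ, y ≤ a + M * (x ^ n / n !)) : y ≤ a :=
  ge_of_tendsto (by
      simpa using ((FloorSemiring.tendsto_pow_div_factorial_atTop x).const_mul M).const_add a)
    (.of_forall h)

theorem backward_gronwall_general
    (T : ℝ)
    (ν : Measure ℝ) [IsFiniteMeasure ν] [NullSingletonClass ν]
    (c : ℝ) (hc : 0 ≤ c)
    (g : ℝ → ℝ) (hg_meas : Measurable g)
    (M : ℝ) (hg_bdd : ∀ s : ℝ, |g s| ≤ M)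
    (hg : ∀ t ∈ Set.Icc (0 : ℝ) T,
      0 ≤ g t ∧ g t ≤ c + ∫ s in Set.Ico t T, g s ∂ν) :
    ∀ t ∈ Set.Icc (0 : ℝ) T,
      g t ≤ c * Real.exp ((ν (Set.Ico t T)).toReal) := by
  intro t ht
  have picard := le_sum_pow_div_factorial_add_of_le_add_setIntegral hg_meas hg_bdd
    (fun t ht => (hg t ht).2)
  refine le_of_forall_le_add_mul_pow_div_factorial (M := M) (x := ν.real (Ico t T))
    fun n => (picard n t ht).trans ?_
  gcongr
  exact Real.sum_le_exp_of_nonneg measureReal_nonneg n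

/-- **Backward Gronwall inequality.** Let `T > 0`, `ν` a finite atomless Borel measure on `ℝ`,
`c ≥ 0`, and `g : ℝ → ℝ` a bounded Borel measurable function satisfying
`0 ≤ g t ≤ c + ∫_{[t,T)} g dν` for every `t ∈ [0,T]`. Then
`g t ≤ c * exp (ν [t,T))` for every `t ∈ [0,T]`. -/
theorem backward_gronwall
    (T : ℝ) (hT : 0 < T)
    (ν : Measure ℝ) [IsFiniteMeasure ν] [NullSingletonClass ν]
    (c : ℝ) (hc : 0 ≤ c)
    (g : ℝ → ℝ) (hg_meas : Measurable g)
    (M : ℝ) (hg_bdd : ∀ s : ℝ, |g s| ≤ M)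
    (hg : ∀ t ∈ Set.Icc (0 : ℝ) T,
      0 ≤ g t ∧ g t ≤ c + ∫ s in Set.Ico t T, g s ∂ν) :
    ∀ t ∈ Set.Icc (0 : ℝ) T,
      g t ≤ c * Real.exp ((ν (Set.Ico t T)).toReal) :=
  backward_gronwall_general T ν c hc g hg_meas M hg_bdd hg
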